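/- Let p be an odd prime, f : (ZMod p)^n → ℂ a Boolean function (f(x) ∈ {−1,1} for all x), η ∈ (ZMod p)^n with η ≠ 0, and λ ∈ ZMod p. Let B = ∑_{γ ∈ (ZMod p)^n} (|f̂(γ)| + |f̂(η+γ)| − |f̂(γ) + ω^λ·f̂(η+γ)|). Then, summing over a set T of coset representatives of the subgroup ⟨η⟩ = {0, η, 2η, …, (p−1)η} in (ZMod p)^n (one representative per coset): ∑_{γ ∈ T} ( ∑_{k=0}^{p−1} |f̂(γ + kη)| − |∑_{k=0}^{p−1} f̂(γ + kη)·ω^{λk}| ) ≥ B/3. -/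

import Mathlib

/-- `ω = exp(2πi/p)`, a primitive `p`-th root of unity. -/
noncomputable def pomega (p : ℕ) : ℂ :=
  Complex.exp (2 * Real.pi * Complex.I / p)

/-- The character `χ_α(x) = ω^{⟨α,x⟩}` on `(ZMod p)^n` (well-defined via `ZMod.val`
since `ω^p = 1`). -/
noncomputable def pchi (p n : ℕ) (α x : Fin n → ZMod p) : ℂ :=
  pomega p ^ (∑ i, α i * x i : ZMod p).val

/-- The Fourier coefficient `f̂(α) = p^{-n} ∑_x f(x) conj(χ_α(x))`. -/
noncomputable def phat (p n : ℕ) [NeZero p] (f : (Fin n → ZMod p) → ℂ)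
    (α : Fin n → ZMod p) : ℂ :=
  ((p : ℂ) ^ n)⁻¹ * ∑ x : Fin n → ZMod p, f x * (starRingEnd ℂ) (pchi p n α x)

/-!
Write `a k = f̂(t + kη)` along one coset `t + ⟨η⟩` and `S = ∑ₖ a k ω^{λk}`. Pairing each term
`a k + ω^λ a (k+1)` with `ω^{λk}` shifts the second summand into `a (k+1) ω^{λ(k+1)}`, so
`∑ₖ (a k + ω^λ a (k+1)) ω^{λk} = 2S` and hence `∑ₖ |a k + ω^λ a (k+1)| ≥ 2|S|`. The part of `B`
coming from the coset is therefore at most `2A - 2|S| ≤ 3(A - |S|)` with `A = ∑ₖ |a k|`, using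
`|S| ≤ A`. Summing over the cosets, which partition `(ZMod p)^n` since `η ≠ 0`, gives `B ≤ 3 ∑_T`.
-/

open Finset

lemma pomega_pow_self {p : ℕ} (hp : p ≠ 0) : pomega p ^ p = 1 := by
  rw [pomega, ← Complex.exp_nat_mul, mul_div_cancel₀ _ (Nat.cast_ne_zero.mpr hp)]
  exact Complex.exp_two_pi_mul_I

lemma norm_pomega (p : ℕ) : ‖pomega p‖ = 1 := by
  rw [pomega, show 2 * Real.pi * Complex.I / p = ((2 * Real.pi / p : ℝ) : ℂ) * Complex.I by
    push_cast; ring]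
  exact Complex.norm_exp_ofReal_mul_I _

lemma ZMod.sum_eq_sum_range {p : ℕ} [NeZero p] {M : Type*} [AddCommMonoid M] (F : ZMod p → M) :
    ∑ k : ZMod p, F k = ∑ k ∈ range p, F k :=
  sum_nbij' ZMod.val Nat.cast (fun a _ ↦ mem_range.mpr (ZMod.val_lt a)) (fun _ _ ↦ mem_univ _)
    (fun a _ ↦ ZMod.natCast_zmod_val a) (fun _ hk ↦ ZMod.val_cast_of_lt (mem_range.mp hk))
    (fun a _ ↦ by rw [ZMod.natCast_zmod_val])

lemma pow_val_add_one {M : Type*} [Monoid M] {p : ℕ} [NeZero p] {c : M} (hc : c ^ p = 1)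
    (k : ZMod p) : c ^ (k + 1).val = c * c ^ k.val := by
  rw [ZMod.val_add, ZMod.val_one_eq_one_mod, ← pow_eq_pow_mod _ hc, pow_add,
    ← pow_eq_pow_mod _ hc, pow_one, ← pow_succ, pow_succ']

lemma Fintype.sum_eq_sum_sum_add_smul {K V M : Type*} [DivisionRing K] [Fintype K]
    [AddCommGroup V] [Module K V] [Fintype V] [AddCommMonoid M] {η : V} (hη : η ≠ 0)
    {T : Finset V} (hT : ∀ v, ∃! t, t ∈ T ∧ ∃ k : K, v = t + k • η) (g : V → M) :
    ∑ v, g v = ∑ t ∈ T, ∑ k : K, g (t + k • η) := by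
  rw [← sum_product']
  refine (sum_bij (fun x _ ↦ x.1 + x.2 • η) (fun _ _ ↦ mem_univ _) ?_ ?_ fun _ _ ↦ rfl).symm
  · rintro ⟨t₁, k₁⟩ h₁ ⟨t₂, k₂⟩ h₂ (heq : t₁ + k₁ • η = t₂ + k₂ • η)
    have ht : t₁ = t₂ :=
      (hT _).unique ⟨(mem_product.mp h₁).1, k₁, rfl⟩ ⟨(mem_product.mp h₂).1, k₂, heq⟩
    subst ht
    exact Prod.ext rfl (smul_left_injective K hη (add_left_cancel heq))
  · intro v _
    obtain ⟨t, ⟨ht, k, rfl⟩, -⟩ := hT v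
    exact ⟨(t, k), mem_product.mpr ⟨ht, mem_univ _⟩, rfl⟩

section RCLike

variable {ι 𝕜 : Type*} [Fintype ι] [RCLike 𝕜]

lemma norm_sum_mul_le_sum_norm {a w : ι → 𝕜} (hw : ∀ k, ‖w k‖ = 1) :
    ‖∑ k, a k * w k‖ ≤ ∑ k, ‖a k‖ :=
  (norm_sum_le _ _).trans_eq (sum_congr rfl fun k _ ↦ by rw [norm_mul, hw, mul_one])

lemma sum_norm_add_norm_sub_norm_add_le (σ : Equiv.Perm ι) (a w : ι → 𝕜) (c : 𝕜)
    (hw : ∀ k, ‖w k‖ = 1) (hσ : ∀ k, w (σ k) = c * w k) :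
    ∑ k, (‖a k‖ + ‖a (σ k)‖ - ‖a k + c * a (σ k)‖)
      ≤ 3 * (∑ k, ‖a k‖ - ‖∑ k, a k * w k‖) := by
  set S := ∑ k, a k * w k
  have hpair : ∑ k, (a k + c * a (σ k)) * w k = 2 * S := by
    have hshift : ∑ k, a (σ k) * w (σ k) = S := Equiv.sum_comp σ fun k ↦ a k * w k
    simp only [add_mul, sum_add_distrib, mul_assoc, mul_left_comm c, ← hσ, hshift, two_mul, S]
  have hpair_le : 2 * ‖S‖ ≤ ∑ k, ‖a k + c * a (σ k)‖ := by
    simpa [hpair, norm_mul] using norm_sum_mul_le_sum_norm (a := fun k ↦ a k + c * a (σ k)) hw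
  have hS : ‖S‖ ≤ ∑ k, ‖a k‖ := norm_sum_mul_le_sum_norm hw
  have hσnorm : ∑ k, ‖a (σ k)‖ = ∑ k, ‖a k‖ := Equiv.sum_comp σ fun k ↦ ‖a k‖
  rw [sum_sub_distrib, sum_add_distrib, hσnorm]
  linarith

end RCLike

lemma ZMod.sum_norm_add_norm_sub_norm_add_le {p : ℕ} [NeZero p] (a : ZMod p → ℂ) {c : ℂ}
    (hc : c ^ p = 1) (hc_norm : ‖c‖ = 1) :
    ∑ k : ZMod p, (‖a k‖ + ‖a (k + 1)‖ - ‖a k + c * a (k + 1)‖)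
      ≤ 3 * (∑ k ∈ range p, ‖a k‖ - ‖∑ k ∈ range p, a k * c ^ k‖) := by
  have hrange : ∑ k ∈ range p, a k * c ^ k = ∑ k : ZMod p, a k * c ^ k.val := by
    rw [ZMod.sum_eq_sum_range]
    exact sum_congr rfl fun k hk ↦ by rw [ZMod.val_cast_of_lt (mem_range.mp hk)]
  rw [hrange, ← ZMod.sum_eq_sum_range fun k ↦ ‖a k‖]
  exact _root_.sum_norm_add_norm_sub_norm_add_le (Equiv.addRight 1) a (fun k ↦ c ^ k.val) c
    (fun k ↦ by rw [norm_pow, hc_norm, one_pow]) (pow_val_add_one hc)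

theorem p_overcounting_general {p n : ℕ} [Fact p.Prime]
    (f : (Fin n → ZMod p) → ℂ)
    (η : Fin n → ZMod p) (hη : η ≠ 0) (l : ZMod p)
    (T : Finset (Fin n → ZMod p))
    (hT : ∀ γ : Fin n → ZMod p, ∃! t, t ∈ T ∧ ∃ k : ZMod p, γ = t + k • η)
    (B : ℝ)
    (hB : ∑ γ : Fin n → ZMod p,
        (‖phat p n f γ‖ + ‖phat p n f (η + γ)‖
          - ‖phat p n f γ + pomega p ^ l.val * phat p n f (η + γ)‖) = B) :
    B / 3 ≤ ∑ γ ∈ T,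
      ((∑ k ∈ Finset.range p, ‖phat p n f (γ + k • η)‖)
        - ‖∑ k ∈ Finset.range p,
            phat p n f (γ + k • η) * pomega p ^ (l.val * k)‖) := by
  set c := pomega p ^ l.val
  have hc : c ^ p = 1 := by rw [← pow_mul, mul_comm, pow_mul, pomega_pow_self NeZero.out, one_pow]
  have hc_norm : ‖c‖ = 1 := by rw [norm_pow, norm_pomega, one_pow]
  rw [div_le_iff₀' three_pos, ← hB, Fintype.sum_eq_sum_sum_add_smul hη hT, mul_sum]
  refine sum_le_sum fun t _ ↦ ?_
  have hstep : ∀ k : ZMod p, η + (t + k • η) = t + (k + 1) • η := fun k ↦ by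
    rw [add_smul, one_smul]; abel
  have hcast : ∀ k : ℕ, t + (k : ZMod p) • η = t + k • η := fun k ↦ by
    rw [Nat.cast_smul_eq_nsmul]
  simpa only [hstep, hcast, pow_mul] using
    ZMod.sum_norm_add_norm_sub_norm_add_le (fun k ↦ phat p n f (t + k • η)) hc hc_norm

/-- **Lemma 4.5** (over-counting lemma): with `T` a set of coset representatives
of the subgroup `⟨η⟩ = {kη : k ∈ ZMod p}` in `(ZMod p)^n`, if
`B = ∑_γ (|f̂(γ)| + |f̂(η+γ)| − |f̂(γ) + ω^λ f̂(η+γ)|)`, then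
`∑_{γ ∈ T} (∑_{k<p} |f̂(γ+kη)| − |∑_{k<p} f̂(γ+kη) ω^{λk}|) ≥ B/3`. -/
theorem p_overcounting {p n : ℕ} [Fact p.Prime] (hp2 : p ≠ 2)
    (f : (Fin n → ZMod p) → ℂ) (hf : ∀ x, f x = 1 ∨ f x = -1)
    (η : Fin n → ZMod p) (hη : η ≠ 0) (l : ZMod p)
    (T : Finset (Fin n → ZMod p))
    (hT : ∀ γ : Fin n → ZMod p, ∃! t, t ∈ T ∧ ∃ k : ZMod p, γ = t + k • η)
    (B : ℝ)
    (hB : ∑ γ : Fin n → ZMod p,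
        (‖phat p n f γ‖ + ‖phat p n f (η + γ)‖
          - ‖phat p n f γ + pomega p ^ l.val * phat p n f (η + γ)‖) = B) :
    B / 3 ≤ ∑ γ ∈ T,
      ((∑ k ∈ Finset.range p, ‖phat p n f (γ + k • η)‖)
        - ‖∑ k ∈ Finset.range p,
            phat p n f (γ + k • η) * pomega p ^ (l.val * k)‖) :=
  p_overcounting_general f η hη l T hT B hB
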